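/- For F₁(x) = x·log(x + √(1+x²)) − √(1+x²) + 1 and F₂(x) = k·x·log(x) with fixed k > e, one has F₁ ≻ F₂; i.e., there exists b > 0 such that F₁(bx) ≥ F₂(x) for all x > 0. -/

import Mathlib

/-!
For `y > 0` we have `y ≤ √(1 + y²) ≤ 1 + y`, hence `F₁(y) ≥ y log (2y) - y`.
With `b = k` this gives `F₁(kx) ≥ kx log x + kx (log (2k) - 1)`, and `log (2k) > log k > 1`.
-/

open Real

lemma Real.log_two_mul_le_arsinh {y : ℝ} (hy : 0 < y) : log (2 * y) ≤ arsinh y := by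
  refine log_le_log (by positivity) ?_
  have : y ≤ √(1 + y ^ 2) := le_sqrt_of_sq_le (by linarith)
  linarith

lemma Real.sqrt_one_add_sq_le_one_add {y : ℝ} (hy : 0 ≤ y) : √(1 + y ^ 2) ≤ 1 + y :=
  sqrt_le_iff.mpr ⟨by positivity, by nlinarith⟩

lemma Real.mul_log_two_mul_sub_le {y : ℝ} (hy : 0 < y) :
    y * log (2 * y) - y ≤ y * arsinh y - √(1 + y ^ 2) + 1 := by
  have := mul_le_mul_of_nonneg_left (log_two_mul_le_arsinh hy) hy.le
  have := sqrt_one_add_sq_le_one_add hy.le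
  linarith

/-- For F₁(x) = x·log(x+√(1+x²)) − √(1+x²) + 1 and F₂(x) = k·x·log x with k > e,
one has F₁ ≻ F₂. -/
theorem stmt5 (k : ℝ) (hk : Real.exp 1 < k) :
    ∃ b : ℝ, 0 < b ∧ ∀ x : ℝ, 0 < x →
      k * x * Real.log x ≤
        (b * x) * Real.log (b * x + Real.sqrt (1 + (b * x) ^ 2))
          - Real.sqrt (1 + (b * x) ^ 2) + 1 := by
  have hk0 : 0 < k := (exp_pos 1).trans hk
  have hlogk : 1 < log k := (lt_log_iff_exp_lt hk0).mpr hk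
  refine ⟨k, hk0, fun x hx => ?_⟩
  have hkx : 0 < k * x := mul_pos hk0 hx
  have hlog : log (2 * (k * x)) = log 2 + log k + log x := by
    rw [log_mul two_ne_zero hkx.ne', log_mul hk0.ne' hx.ne']
    ring
  calc k * x * log x
      ≤ k * x * log x + k * x * (log 2 + log k - 1) :=
        le_add_of_nonneg_right (mul_nonneg hkx.le (by linarith [log_pos one_lt_two]))
    _ = k * x * log (2 * (k * x)) - k * x := by rw [hlog]; ring
    _ ≤ _ := mul_log_two_mul_sub_le hkx
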